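/- arXiv:2501.18962 — 3 statements merged into one kernel-verified Lean document; each statement's English description precedes it below -/
import Mathlib

section
/- Let σ, κ > 0, a = 1 + σ²/κ², T ≥ 1, and C > 0. Define σ_T²(n) = σ² · Σ_{t=0}^{T−1} 1/(n_t · a^{2(T−t)−1}) for positive real sequences n = (n_0, …, n_{T−1}). Then the minimum of σ_T²(n) over all positive sequences with Σ_{t=0}^{T−1} n_t ≤ C is attained exactly at the sequence n_t = C · (a − 1) · aᵗ/(aᵀ − 1) (i.e., n_t proportional to aᵗ with total budget C), and the minimum value equals (σ²/C) · a · (Σ_{t=0}^{T−1} a^{−(T−t)})². -/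
open Finset

/-- Minimizing the final-parameter variance `σ_T²(n) = σ² Σ_{t<T} 1/(nₜ a^{2(T−t)−1})`
over positive sequences with budget `Σ nₜ ≤ C`: the minimum is attained exactly at
`nₜ = C (a−1) aᵗ/(aᵀ−1)`, with minimum value `(σ²/C) a (Σ_{t<T} a^{−(T−t)})²`. -/
theorem variance_minimizer (σ κ : ℝ) (hσ : 0 < σ) (hκ : 0 < κ)
    (a : ℝ) (ha : a = 1 + σ ^ 2 / κ ^ 2) (T : ℕ) (hT : 1 ≤ T) (C : ℝ) (hC : 0 < C)
    (S : (ℕ → ℝ) → ℝ)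
    (hS : ∀ n : ℕ → ℝ, S n = σ ^ 2 * ∑ t ∈ Finset.range T, 1 / (n t * a ^ (2 * (T - t) - 1)))
    (nstar : ℕ → ℝ) (hnstar : ∀ t, nstar t = C * (a - 1) * a ^ t / (a ^ T - 1)) :
    ((∀ t < T, 0 < nstar t) ∧ (∑ t ∈ Finset.range T, nstar t) ≤ C) ∧
      (∀ n : ℕ → ℝ, (∀ t < T, 0 < n t) → (∑ t ∈ Finset.range T, n t) ≤ C → S nstar ≤ S n) ∧
      (∀ n : ℕ → ℝ, (∀ t < T, 0 < n t) → (∑ t ∈ Finset.range T, n t) ≤ C →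
        S n = S nstar → ∀ t < T, n t = nstar t) ∧
      S nstar = σ ^ 2 / C * a * (∑ t ∈ Finset.range T, (a ^ (T - t))⁻¹) ^ 2 := by
  have hσ2 : (0:ℝ) < σ ^ 2 := by positivity
  have hκ2 : (0:ℝ) < κ ^ 2 := by positivity
  have ha1 : 1 < a := by
    rw [ha]; have := div_pos hσ2 hκ2; linarith
  have ha0 : (0:ℝ) < a := lt_trans one_pos ha1
  have haT : 1 < a ^ T := one_lt_pow₀ ha1 (by omega)
  set c : ℕ → ℝ := fun t => (a ^ (T - t))⁻¹ with hc
  have hcpos : ∀ t, 0 < c t := fun t => by positivity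
  set Q : ℝ := ∑ t ∈ Finset.range T, c t with hQ
  have hQpos : 0 < Q := Finset.sum_pos (fun t _ => hcpos t)
    (Finset.nonempty_range_iff.mpr (by omega))
  set lam : ℝ := C / Q with hlamdef
  have hlam0 : 0 < lam := div_pos hC hQpos
  -- geometric sum
  have hgeom : ∑ t ∈ Finset.range T, a ^ t = (a ^ T - 1) / (a - 1) :=
    geom_sum_eq (ne_of_gt ha1) T
  have hckey : ∀ t < T, c t = a ^ t / a ^ T := by
    intro t ht
    have hsplit : a ^ t * a ^ (T - t) = a ^ T := by
      rw [← pow_add]; congr 1; omega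
    have h1 : (0:ℝ) < a ^ (T - t) := by positivity
    have h2 : (0:ℝ) < a ^ t := by positivity
    have h3 : (0:ℝ) < a ^ T := by positivity
    simp only [hc]
    field_simp
    linarith [hsplit]
  have hQval : Q = (a ^ T - 1) / ((a - 1) * a ^ T) := by
    rw [hQ, Finset.sum_congr rfl (fun t ht => hckey t (Finset.mem_range.mp ht)),
      ← Finset.sum_div, hgeom, div_div]
  have haT0 : (0:ℝ) < a ^ T := by positivity
  have hne1 : a ^ T - 1 ≠ 0 := ne_of_gt (by linarith)
  have hneT : a ^ T ≠ 0 := ne_of_gt haT0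
  have hlamval : lam = C * (a - 1) * a ^ T / (a ^ T - 1) := by
    rw [hlamdef, hQval]
    field_simp
  have hnc : ∀ t < T, nstar t = lam * c t := by
    intro t ht
    rw [hnstar, hlamval, hckey t ht, div_mul_div_comm,
      show C * (a - 1) * a ^ T * a ^ t = C * (a - 1) * a ^ t * a ^ T by ring,
      mul_div_mul_right _ _ hneT]
  have hnstarpos : ∀ t, 0 < nstar t := by
    intro t
    rw [hnstar]
    have h1 : (0:ℝ) < a ^ t := by positivity
    apply div_pos
    · exact mul_pos (mul_pos hC (by linarith)) h1
    · linarith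
  have hsumnstar : ∑ t ∈ Finset.range T, nstar t = C := by
    rw [Finset.sum_congr rfl (fun t ht => hnc t (Finset.mem_range.mp ht)),
      ← Finset.mul_sum, ← hQ, hlamdef]
    exact div_mul_cancel₀ C hQpos.ne'
  -- rewrite S
  have hSrw : ∀ n : ℕ → ℝ, (∀ t < T, 0 < n t) →
      S n = σ ^ 2 * a * ∑ t ∈ Finset.range T, (c t) ^ 2 / n t := by
    intro n hn
    rw [hS]
    have e : ∀ t ∈ Finset.range T,
        1 / (n t * a ^ (2 * (T - t) - 1)) = a * ((c t) ^ 2 / n t) := by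
      intro t ht
      have htT := Finset.mem_range.mp ht
      have hx : (0:ℝ) < n t := hn t htT
      have hpow : a ^ (2 * (T - t) - 1) * a = (a ^ (T - t)) ^ 2 := by
        rw [← pow_succ, ← pow_mul]
        congr 1; omega
      have h1 : (0:ℝ) < a ^ (T - t) := by positivity
      have h2 : (0:ℝ) < a ^ (2 * (T - t) - 1) := by positivity
      have hc2 : c t = (a ^ (T - t))⁻¹ := rfl
      rw [hc2]
      field_simp
      nlinarith [hpow]
    rw [Finset.sum_congr rfl e, ← Finset.mul_sum]
    ring
  -- per-term identity
  have key : ∀ cv x : ℝ, 0 < cv → 0 < x →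
      cv ^ 2 / x = (2 * cv / lam - x / lam ^ 2) + (cv * lam - x) ^ 2 / (x * lam ^ 2) := by
    intro cv x hcv hx
    field_simp
    ring
  -- decomposition of the core sum
  have hdecomp : ∀ n : ℕ → ℝ, (∀ t < T, 0 < n t) →
      ∑ t ∈ Finset.range T, (c t) ^ 2 / n t =
        2 * Q / lam - (∑ t ∈ Finset.range T, n t) / lam ^ 2 +
          ∑ t ∈ Finset.range T, (c t * lam - n t) ^ 2 / (n t * lam ^ 2) := by
    intro n hn
    have e : ∀ t ∈ Finset.range T, (c t) ^ 2 / n t =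
        (2 * c t / lam - n t / lam ^ 2) + (c t * lam - n t) ^ 2 / (n t * lam ^ 2) := by
      intro t ht
      exact key (c t) (n t) (hcpos t) (hn t (Finset.mem_range.mp ht))
    rw [Finset.sum_congr rfl e, Finset.sum_add_distrib, Finset.sum_sub_distrib,
      ← Finset.sum_div, ← Finset.sum_div, ← Finset.mul_sum, ← hQ]
  -- value at nstar
  have hSnstar : S nstar = σ ^ 2 * a * (Q ^ 2 / C) := by
    rw [hSrw nstar (fun t _ => hnstarpos t)]
    have e : ∀ t ∈ Finset.range T, (c t) ^ 2 / nstar t = c t / lam := by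
      intro t ht
      rw [hnc t (Finset.mem_range.mp ht)]
      have := hcpos t
      field_simp
    rw [Finset.sum_congr rfl e, ← Finset.sum_div, ← hQ, hlamdef]
    field_simp
  have haQ : (0:ℝ) < σ ^ 2 * a := by positivity
  refine ⟨⟨fun t _ => hnstarpos t, le_of_eq hsumnstar⟩, ?_, ?_, ?_⟩
  · -- minimality
    intro n hn hbud
    rw [hSnstar, hSrw n hn, hdecomp n hn]
    have hDnn : 0 ≤ ∑ t ∈ Finset.range T, (c t * lam - n t) ^ 2 / (n t * lam ^ 2) := by
      apply Finset.sum_nonneg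
      intro t ht
      have h := hn t (Finset.mem_range.mp ht)
      have := pow_pos hlam0 2
      exact div_nonneg (sq_nonneg _) (mul_pos h this).le
    have hq : Q ^ 2 / C = 2 * Q / lam - C / lam ^ 2 := by
      rw [hlamdef]; field_simp; ring
    have hdiv : (∑ t ∈ Finset.range T, n t) / lam ^ 2 ≤ C / lam ^ 2 :=
      (div_le_div_iff_of_pos_right (pow_pos hlam0 2)).mpr hbud
    apply mul_le_mul_of_nonneg_left _ (le_of_lt haQ)
    rw [hq]
    linarith
  · -- uniqueness
    intro n hn hbud heq
    have h1 : S n = σ ^ 2 * a * (Q ^ 2 / C) := by rw [heq, hSnstar]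
    rw [hSrw n hn, hdecomp n hn] at h1
    have hq : Q ^ 2 / C = 2 * Q / lam - C / lam ^ 2 := by
      rw [hlamdef]; field_simp; ring
    have h2 : 2 * Q / lam - (∑ t ∈ Finset.range T, n t) / lam ^ 2 +
        ∑ t ∈ Finset.range T, (c t * lam - n t) ^ 2 / (n t * lam ^ 2) = Q ^ 2 / C :=
      mul_left_cancel₀ (ne_of_gt haQ) h1
    have hDnn : ∀ t ∈ Finset.range T, 0 ≤ (c t * lam - n t) ^ 2 / (n t * lam ^ 2) := by
      intro t ht
      have h := hn t (Finset.mem_range.mp ht)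
      have := pow_pos hlam0 2
      exact div_nonneg (sq_nonneg _) (mul_pos h this).le
    have hdiv : (∑ t ∈ Finset.range T, n t) / lam ^ 2 ≤ C / lam ^ 2 :=
      (div_le_div_iff_of_pos_right (pow_pos hlam0 2)).mpr hbud
    have hDsum : ∑ t ∈ Finset.range T, (c t * lam - n t) ^ 2 / (n t * lam ^ 2) ≤ 0 := by
      rw [hq] at h2; linarith
    have hDzero : ∀ t ∈ Finset.range T, (c t * lam - n t) ^ 2 / (n t * lam ^ 2) = 0 := by
      have := (Finset.sum_eq_zero_iff_of_nonneg hDnn).mp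
        (le_antisymm hDsum (Finset.sum_nonneg hDnn))
      exact this
    intro t ht
    have h3 := hDzero t (Finset.mem_range.mpr ht)
    have hnt := hn t ht
    have hden : (0:ℝ) < n t * lam ^ 2 := mul_pos hnt (pow_pos hlam0 2)
    have h4 : (c t * lam - n t) ^ 2 = 0 := by
      rcases div_eq_zero_iff.mp h3 with h | h
      · exact h
      · exact absurd h hden.ne'
    have h5 : c t * lam - n t = 0 := by
      exact pow_eq_zero_iff (two_ne_zero) |>.mp h4
    rw [hnc t ht]; linarith
  · rw [hSnstar]
    ring
end

section
/- (Theorem 3.1.) Let σ, κ > 0, a = 1 + σ²/κ², T ≥ 1, C > 0, and let the initial parameter satisfy |θ⁽⁰⁾| ≤ aᵀ · √(σ² + κ²). For a positive real sequence n = (n_0, …, n_{T−1}), define μ_T = θ⁽⁰⁾/aᵀ, σ_T²(n) = σ² · Σ_{t=0}^{T−1} 1/(n_t · a^{2(T−t)−1}), and the expected final reward F(n) = κ/√(σ² + κ² + σ_T²(n)) · exp(−μ_T²/(2(σ² + κ² + σ_T²(n)))). Then the maximum of F(n) over all positive sequences with Σ_{t=0}^{T−1} n_t ≤ C is attained exactly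 at n_t = C · (a − 1) · aᵗ/(aᵀ − 1), i.e., at the exponentially growing policy n_t ∝ aᵗ. -/
open Finset Real

lemma aux_sqrt_exp (x : ℝ) (hx : 0 < x) : Real.sqrt x = Real.exp (Real.log x / 2) := by
  have h2 : Real.exp (Real.log x / 2) ^ 2 = x := by
    rw [sq, ← Real.exp_add, show Real.log x / 2 + Real.log x / 2 = Real.log x from by ring,
      Real.exp_log hx]
  calc Real.sqrt x = Real.sqrt (Real.exp (Real.log x / 2) ^ 2) := by rw [h2]
    _ = Real.exp (Real.log x / 2) := Real.sqrt_sq (Real.exp_pos _).le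

lemma aux_gmono (κ m x y : ℝ) (hκ : 0 < κ) (hmx : m ≤ x) (hx : 0 < x) (hxy : x < y) :
    κ / Real.sqrt y * Real.exp (-m / (2 * y)) < κ / Real.sqrt x * Real.exp (-m / (2 * x)) := by
  have hy : 0 < y := hx.trans hxy
  have ex : κ / Real.sqrt x * Real.exp (-m / (2 * x))
      = κ * Real.exp (-m / (2 * x) - Real.log x / 2) := by
    rw [aux_sqrt_exp x hx, div_mul_eq_mul_div, mul_div_assoc, ← Real.exp_sub]
  have ey : κ / Real.sqrt y * Real.exp (-m / (2 * y))
      = κ * Real.exp (-m / (2 * y) - Real.log y / 2) := by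
    rw [aux_sqrt_exp y hy, div_mul_eq_mul_div, mul_div_assoc, ← Real.exp_sub]
  rw [ex, ey]
  have hlog : Real.log x - Real.log y < x / y - 1 := by
    have h1 : Real.log (x / y) < x / y - 1 :=
      Real.log_lt_sub_one_of_pos (by positivity) (by
        intro h
        exact (ne_of_lt hxy) (by field_simp at h; linarith))
    rwa [Real.log_div hx.ne' hy.ne'] at h1
  have h2 : m / x - m / y ≤ 1 - x / y := by
    have e1 : m / x - m / y = (m * (y - x)) / (x * y) := by field_simp
    have e2 : 1 - x / y = (x * (y - x)) / (x * y) := by field_simp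
    rw [e1, e2, div_le_div_iff_of_pos_right (by positivity)]
    nlinarith
  have hdiv1 : -m / (2 * x) = (-(m / x)) / 2 := by ring
  have hdiv2 : -m / (2 * y) = (-(m / y)) / 2 := by ring
  refine mul_lt_mul_of_pos_left (Real.exp_lt_exp.mpr ?_) hκ
  rw [hdiv1, hdiv2]
  linarith

/-- Theorem 3.1: with `a = 1 + σ²/κ²` and `|θ⁽⁰⁾| ≤ aᵀ √(σ²+κ²)`, the expected final reward
`F(n) = κ/√(σ²+κ²+σ_T²(n)) · exp(−μ_T²/(2(σ²+κ²+σ_T²(n))))`, where `μ_T = θ⁽⁰⁾/aᵀ` and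
`σ_T²(n) = σ² Σ_{t<T} 1/(nₜ a^{2(T−t)−1})`, is maximized over positive sequences with
budget `Σ nₜ ≤ C` exactly at the exponentially growing policy `nₜ = C (a−1) aᵗ/(aᵀ−1)`. -/
theorem optimal_policy_is_exponential (σ κ : ℝ) (hσ : 0 < σ) (hκ : 0 < κ)
    (a : ℝ) (ha : a = 1 + σ ^ 2 / κ ^ 2) (T : ℕ) (hT : 1 ≤ T) (C : ℝ) (hC : 0 < C)
    (θ₀ : ℝ) (hθ₀ : |θ₀| ≤ a ^ T * Real.sqrt (σ ^ 2 + κ ^ 2))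
    (μT : ℝ) (hμT : μT = θ₀ / a ^ T)
    (S : (ℕ → ℝ) → ℝ)
    (hS : ∀ n : ℕ → ℝ, S n = σ ^ 2 * ∑ t ∈ Finset.range T, 1 / (n t * a ^ (2 * (T - t) - 1)))
    (F : (ℕ → ℝ) → ℝ)
    (hF : ∀ n : ℕ → ℝ, F n = κ / Real.sqrt (σ ^ 2 + κ ^ 2 + S n) *
      Real.exp (-μT ^ 2 / (2 * (σ ^ 2 + κ ^ 2 + S n))))
    (nstar : ℕ → ℝ) (hnstar : ∀ t, nstar t = C * (a - 1) * a ^ t / (a ^ T - 1)) :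
    ((∀ t < T, 0 < nstar t) ∧ (∑ t ∈ Finset.range T, nstar t) ≤ C) ∧
      (∀ n : ℕ → ℝ, (∀ t < T, 0 < n t) → (∑ t ∈ Finset.range T, n t) ≤ C → F n ≤ F nstar) ∧
      (∀ n : ℕ → ℝ, (∀ t < T, 0 < n t) → (∑ t ∈ Finset.range T, n t) ≤ C →
        F n = F nstar → ∀ t < T, n t = nstar t) := by
  have hκ2 : (0:ℝ) < κ ^ 2 := by positivity
  have hσ2 : (0:ℝ) < σ ^ 2 := by positivity
  have ha1 : 1 < a := by
    rw [ha]; have := div_pos hσ2 hκ2; linarith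
  have ha0 : (0:ℝ) < a := by linarith
  have haT1 : 1 < a ^ T := one_lt_pow₀ ha1 (by omega)
  have haT0 : (0:ℝ) < a ^ T - 1 := by linarith
  have ha10 : (0:ℝ) < a - 1 := by linarith
  have hnpos : ∀ t, 0 < nstar t := by
    intro t
    rw [hnstar t]
    exact div_pos (mul_pos (mul_pos hC ha10) (pow_pos ha0 t)) haT0
  have hsum_star : ∑ t ∈ Finset.range T, nstar t = C := by
    have hg : ∑ t ∈ Finset.range T, a ^ t = (a ^ T - 1) / (a - 1) :=
      geom_sum_eq (ne_of_gt ha1) T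
    calc ∑ t ∈ Finset.range T, nstar t
        = ∑ t ∈ Finset.range T, (C * (a - 1) / (a ^ T - 1)) * a ^ t := by
          refine Finset.sum_congr rfl fun t _ => ?_
          rw [hnstar t]; ring
      _ = (C * (a - 1) / (a ^ T - 1)) * ((a ^ T - 1) / (a - 1)) := by
          rw [← Finset.mul_sum, hg]
      _ = C := by field_simp
  have hB0 : (0:ℝ) < σ ^ 2 + κ ^ 2 := by positivity
  have hμ : μT ^ 2 ≤ σ ^ 2 + κ ^ 2 := by
    rw [hμT, div_pow, div_le_iff₀ (by positivity)]
    nlinarith [mul_self_le_mul_self (abs_nonneg θ₀) hθ₀, sq_abs θ₀,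
      Real.sq_sqrt hB0.le, pow_pos ha0 T]
  have hSpos : ∀ n : ℕ → ℝ, (∀ t < T, 0 < n t) → 0 < S n := by
    intro n hn
    rw [hS n]
    refine mul_pos hσ2 (Finset.sum_pos (fun t ht => ?_) ?_)
    · exact div_pos one_pos
        (mul_pos (hn t (Finset.mem_range.mp ht)) (pow_pos ha0 _))
    · exact Finset.nonempty_range_iff.mpr (by omega)
  -- the constant λ = 1/(nstar t ^ 2 * e t)
  set Λ : ℝ := (a ^ T - 1) ^ 2 * a / ((a - 1) ^ 2 * C ^ 2 * a ^ (2 * T)) with hΛdef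
  have hΛpos : 0 < Λ :=
    div_pos (mul_pos (pow_pos haT0 2) ha0)
      (mul_pos (mul_pos (pow_pos ha10 2) (pow_pos hC 2)) (pow_pos ha0 _))
  have hpow : ∀ t, t < T → a ^ t * a ^ t * a ^ (2 * (T - t) - 1) * a = a ^ (2 * T) := by
    intro t ht
    rw [← pow_add, ← pow_add, ← pow_succ]
    congr 1
    omega
  have hΛ' : ∀ t, t < T → Λ * (nstar t ^ 2 * a ^ (2 * (T - t) - 1)) = 1 := by
    intro t ht
    have h1 : a - 1 ≠ 0 := ha10.ne'
    have h2 : a ^ T - 1 ≠ 0 := haT0.ne'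
    have h3 : a ^ t ≠ 0 := (pow_pos ha0 t).ne'
    have h4 : a ^ (2 * (T - t) - 1) ≠ 0 := (pow_pos ha0 _).ne'
    rw [hnstar t, hΛdef, ← hpow t ht]
    field_simp
  have hkey : ∀ n : ℕ → ℝ, (∀ t < T, 0 < n t) →
      S n - S nstar = σ ^ 2 * ((∑ t ∈ Finset.range T,
        (nstar t - n t) ^ 2 / (n t * nstar t ^ 2 * a ^ (2 * (T - t) - 1))) +
        Λ * (C - ∑ t ∈ Finset.range T, n t)) := by
    intro n hn
    rw [hS n, hS nstar, ← mul_sub]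
    congr 1
    rw [← Finset.sum_sub_distrib]
    have hterm : ∀ t ∈ Finset.range T,
        1 / (n t * a ^ (2 * (T - t) - 1)) - 1 / (nstar t * a ^ (2 * (T - t) - 1)) =
        (nstar t - n t) ^ 2 / (n t * nstar t ^ 2 * a ^ (2 * (T - t) - 1))
          + Λ * (nstar t - n t) := by
      intro t ht
      have ht' := Finset.mem_range.mp ht
      have hx := hn t ht'
      have hs := hnpos t
      have he : (0:ℝ) < a ^ (2 * (T - t) - 1) := pow_pos ha0 _
      have hΛeq : Λ = 1 / (nstar t ^ 2 * a ^ (2 * (T - t) - 1)) := by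
        rw [eq_div_iff (mul_pos (pow_pos hs 2) he).ne']
        exact hΛ' t ht'
      rw [hΛeq]
      field_simp
      ring
    rw [Finset.sum_congr rfl hterm, Finset.sum_add_distrib]
    congr 1
    rw [← Finset.mul_sum, Finset.sum_sub_distrib, hsum_star]
  have hPnonneg : ∀ n : ℕ → ℝ, (∀ t < T, 0 < n t) →
      0 ≤ ∑ t ∈ Finset.range T,
        (nstar t - n t) ^ 2 / (n t * nstar t ^ 2 * a ^ (2 * (T - t) - 1)) := by
    intro n hn
    refine Finset.sum_nonneg fun t ht => div_nonneg (sq_nonneg _) ?_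
    exact (mul_pos (mul_pos (hn t (Finset.mem_range.mp ht)) (pow_pos (hnpos t) 2))
      (pow_pos ha0 _)).le
  have hSge : ∀ n : ℕ → ℝ, (∀ t < T, 0 < n t) → (∑ t ∈ Finset.range T, n t) ≤ C →
      S nstar ≤ S n := by
    intro n hn hc
    have h := hkey n hn
    have h1 := hPnonneg n hn
    have h2 : 0 ≤ Λ * (C - ∑ t ∈ Finset.range T, n t) :=
      mul_nonneg hΛpos.le (by linarith)
    nlinarith
  have hSstar : 0 < S nstar := hSpos nstar (fun t _ => hnpos t)
  have hFstrict : ∀ n : ℕ → ℝ, S nstar < S n → F n < F nstar := by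
    intro n hlt
    rw [hF n, hF nstar]
    exact aux_gmono κ (μT ^ 2) (σ ^ 2 + κ ^ 2 + S nstar) (σ ^ 2 + κ ^ 2 + S n) hκ
      (by linarith) (by linarith) (by linarith)
  refine ⟨⟨fun t _ => hnpos t, le_of_eq hsum_star⟩, ?_, ?_⟩
  · intro n hn hc
    rcases eq_or_lt_of_le (hSge n hn hc) with heq | hlt
    · rw [hF n, hF nstar, ← heq]
    · exact (hFstrict n hlt).le
  · intro n hn hc hE t ht
    have hSeq : S nstar = S n := by
      rcases eq_or_lt_of_le (hSge n hn hc) with h | h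
      · exact h
      · exact absurd hE (ne_of_lt (hFstrict n h))
    have hk := hkey n hn
    have hX : (∑ t ∈ Finset.range T,
        (nstar t - n t) ^ 2 / (n t * nstar t ^ 2 * a ^ (2 * (T - t) - 1))) +
        Λ * (C - ∑ t ∈ Finset.range T, n t) = 0 := by
      have h0 : σ ^ 2 * ((∑ t ∈ Finset.range T,
          (nstar t - n t) ^ 2 / (n t * nstar t ^ 2 * a ^ (2 * (T - t) - 1))) +
          Λ * (C - ∑ t ∈ Finset.range T, n t)) = 0 := by linarith
      rcases mul_eq_zero.mp h0 with h | h
      · exact absurd h hσ2.ne'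
      · exact h
    have h2 : 0 ≤ Λ * (C - ∑ t ∈ Finset.range T, n t) := mul_nonneg hΛpos.le (by linarith)
    have hP0 : (∑ t ∈ Finset.range T,
        (nstar t - n t) ^ 2 / (n t * nstar t ^ 2 * a ^ (2 * (T - t) - 1))) = 0 := by
      have := hPnonneg n hn
      linarith
    have hall := (Finset.sum_eq_zero_iff_of_nonneg (fun s hs => div_nonneg (sq_nonneg _)
      (mul_pos (mul_pos (hn s (Finset.mem_range.mp hs)) (pow_pos (hnpos s) 2))
        (pow_pos ha0 _)).le)).mp hP0 t (Finset.mem_range.mpr ht)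
    have hden : (0:ℝ) < n t * nstar t ^ 2 * a ^ (2 * (T - t) - 1) :=
      mul_pos (mul_pos (hn t ht) (pow_pos (hnpos t) 2)) (pow_pos ha0 _)
    have := div_eq_zero_iff.mp hall
    rcases this with h | h
    · have : nstar t - n t = 0 := by
        exact pow_eq_zero_iff (n := 2) (by norm_num) |>.mp h
      linarith
    · exact absurd h hden.ne'
end

section
/- (Theorem C.1, high-dimensional warm-up.) Let σ, κ > 0, a = 1 + σ²/κ², d ≥ 1, T ≥ 1, C > 0, and let the initial parameter θ⁽⁰⁾ ∈ ℝᵈ satisfy ‖θ⁽⁰⁾‖ ≤ aᵀ · √(d(σ² + κ²)). For a positive real sequence n = (n_0, …, n_{T−1}), define μ_T = θ⁽⁰⁾/aᵀ, σ_T²(n) = σ² · Σ_{t=0}^{T−1} 1/(n_t · a^{2(T−t)−1}), and the expected final reward F(n) = (κ²/(σ² + κ² + σ_T²(n)))^{d/2} · exp(−‖μ_T‖²/(2(σ² + κ² + σ_T²(n)))). Then the maximum of F(n) over all positive sequences with Σ_{t=0}^{T−1} n_t ≤ C is attained exactly at n_t = C · (a − 1) · aᵗ/(aᵀ − 1), i.e.,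 at the exponentially growing policy n_t ∝ aᵗ. -/
open Finset Real

lemma aux_strictAntiOn (d m x₀ : ℝ) (hd : 0 < d) (hx₀ : 0 < x₀) (hm : m ≤ d * x₀) :
    StrictAntiOn (fun x : ℝ => -(d/2) * Real.log x - m/2 * x⁻¹) (Set.Ici x₀) := by
  have hderiv : ∀ x : ℝ, 0 < x →
      HasDerivAt (fun x : ℝ => -(d/2) * Real.log x - m/2 * x⁻¹)
        (-(d/2) * x⁻¹ - m/2 * (-(x^2)⁻¹)) x := by
    intro x hx
    exact ((Real.hasDerivAt_log hx.ne').const_mul (-(d/2))).sub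
      ((hasDerivAt_inv hx.ne').const_mul (m/2))
  apply strictAntiOn_of_deriv_neg (convex_Ici x₀)
  · intro x hx
    have hx' : 0 < x := lt_of_lt_of_le hx₀ hx
    exact ((hderiv x hx').differentiableAt).continuousAt.continuousWithinAt
  · intro x hx
    rw [interior_Ici] at hx
    have hx2 : x₀ < x := hx
    have hx' : 0 < x := hx₀.trans hx2
    rw [(hderiv x hx').deriv]
    have h1 : m < d * x := lt_of_le_of_lt hm (by nlinarith)
    rw [show -(d/2) * x⁻¹ - m/2 * (-(x^2)⁻¹) = (m - d*x) / (2*x^2) by field_simp; ring]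
    apply div_neg_of_neg_of_pos (by linarith) (by positivity)

set_option maxHeartbeats 1000000 in
/-- Theorem C.1 (high-dimensional warm-up): with `a = 1 + σ²/κ²` and
`‖θ⁽⁰⁾‖ ≤ aᵀ √(d(σ²+κ²))`, the expected final reward
`F(n) = (κ²/(σ²+κ²+σ_T²(n)))^{d/2} exp(−‖μ_T‖²/(2(σ²+κ²+σ_T²(n))))`, where
`μ_T = θ⁽⁰⁾/aᵀ` and `σ_T²(n) = σ² Σ_{t<T} 1/(nₜ a^{2(T−t)−1})`, is maximized over
positive sequences with budget `Σ nₜ ≤ C` exactly at `nₜ = C (a−1) aᵗ/(aᵀ−1)`. -/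
theorem optimal_policy_is_exponential_multidim (σ κ : ℝ) (hσ : 0 < σ) (hκ : 0 < κ)
    (a : ℝ) (ha : a = 1 + σ ^ 2 / κ ^ 2) (d : ℕ) (hd : 1 ≤ d) (T : ℕ) (hT : 1 ≤ T)
    (C : ℝ) (hC : 0 < C)
    (θ₀ : EuclideanSpace ℝ (Fin d))
    (hθ₀ : ‖θ₀‖ ≤ a ^ T * Real.sqrt (d * (σ ^ 2 + κ ^ 2)))
    (μT : EuclideanSpace ℝ (Fin d)) (hμT : μT = (a ^ T)⁻¹ • θ₀)
    (S : (ℕ → ℝ) → ℝ)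
    (hS : ∀ n : ℕ → ℝ, S n = σ ^ 2 * ∑ t ∈ Finset.range T, 1 / (n t * a ^ (2 * (T - t) - 1)))
    (F : (ℕ → ℝ) → ℝ)
    (hF : ∀ n : ℕ → ℝ, F n = (κ ^ 2 / (σ ^ 2 + κ ^ 2 + S n)) ^ ((d : ℝ) / 2) *
      Real.exp (-‖μT‖ ^ 2 / (2 * (σ ^ 2 + κ ^ 2 + S n))))
    (nstar : ℕ → ℝ) (hnstar : ∀ t, nstar t = C * (a - 1) * a ^ t / (a ^ T - 1)) :
    ((∀ t < T, 0 < nstar t) ∧ (∑ t ∈ Finset.range T, nstar t) ≤ C) ∧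
      (∀ n : ℕ → ℝ, (∀ t < T, 0 < n t) → (∑ t ∈ Finset.range T, n t) ≤ C → F n ≤ F nstar) ∧
      (∀ n : ℕ → ℝ, (∀ t < T, 0 < n t) → (∑ t ∈ Finset.range T, n t) ≤ C →
        F n = F nstar → ∀ t < T, n t = nstar t) := by
  have hκ2 : (0:ℝ) < κ ^ 2 := by positivity
  have hσ2 : (0:ℝ) < σ ^ 2 := by positivity
  have ha1 : 1 < a := by rw [ha]; nlinarith [div_pos hσ2 hκ2]
  have ha0 : (0:ℝ) < a := by linarith
  have haT : 1 < a ^ T := one_lt_pow₀ ha1 (by omega)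
  have hane : a - 1 ≠ 0 := by linarith
  have haTne : a ^ T - 1 ≠ 0 := by linarith
  -- positivity of nstar
  have hnpos : ∀ t, 0 < nstar t := by
    intro t
    rw [hnstar]
    exact div_pos (mul_pos (mul_pos hC (by linarith)) (pow_pos ha0 t)) (by linarith)
  -- sum of nstar equals C
  have hsum : ∑ t ∈ Finset.range T, nstar t = C := by
    have h1 : ∑ t ∈ Finset.range T, nstar t
        = (∑ t ∈ Finset.range T, a ^ t) * (C * (a - 1) / (a ^ T - 1)) := by
      rw [Finset.sum_mul]
      exact Finset.sum_congr rfl (fun t _ => by rw [hnstar]; ring)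
    rw [h1, geom_sum_eq ha1.ne']
    field_simp
  -- the constant M
  set M : ℝ := (a ^ T - 1) ^ 2 / (C ^ 2 * (a - 1) ^ 2 * a ^ (2 * T - 1)) with hMdef
  have hM : 0 < M := div_pos (pow_pos (by linarith) 2) (by positivity)
  -- key identity: (a ^ (2*(T-t)-1))⁻¹ = M * (nstar t)^2 for t < T
  have hcM : ∀ t < T, (a ^ (2 * (T - t) - 1) : ℝ)⁻¹ = M * (nstar t) ^ 2 := by
    intro t ht
    have hpow : a ^ (2 * T - 1) = a ^ (2 * (T - t) - 1) * (a ^ t * a ^ t) := by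
      rw [← pow_add, ← pow_add]
      congr 1
      omega
    rw [hnstar, hMdef, hpow]
    have he : (a : ℝ) ^ (2 * (T - t) - 1) ≠ 0 := (pow_pos ha0 _).ne'
    have ht' : (a : ℝ) ^ t ≠ 0 := (pow_pos ha0 _).ne'
    field_simp
  -- value at nstar : each term equals M * nstar t
  have hterm_star : ∀ t < T, 1 / (nstar t * a ^ (2 * (T - t) - 1)) = M * nstar t := by
    intro t ht
    have hp := hnpos t
    rw [one_div, mul_inv, hcM t ht]
    field_simp
  have hSstar : S nstar = σ ^ 2 * (M * C) := by
    rw [hS]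
    congr 1
    rw [Finset.sum_congr rfl (fun t ht => hterm_star t (Finset.mem_range.mp ht)),
      ← Finset.mul_sum, hsum]
  -- pointwise inequality
  have hptwise : ∀ t < T, ∀ x : ℝ, 0 < x →
      1 / (x * a ^ (2 * (T - t) - 1)) - (2 * (M * nstar t) - M * x)
        = M * (x - nstar t) ^ 2 / x := by
    intro t ht x hx
    have hp := hnpos t
    rw [one_div, mul_inv, hcM t ht]
    field_simp
    ring
  -- main S bound and equality characterization
  have hSsum : ∀ n : ℕ → ℝ, (∀ t < T, 0 < n t) → (∑ t ∈ Finset.range T, n t) ≤ C →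
      S nstar ≤ S n ∧ (S n = S nstar → ∀ t < T, n t = nstar t) := by
    intro n hn hnC
    have hD0 : ∀ t ∈ Finset.range T,
        0 ≤ 1 / (n t * a ^ (2 * (T - t) - 1)) - (2 * (M * nstar t) - M * n t) := by
      intro t ht
      have htT := Finset.mem_range.mp ht
      rw [hptwise t htT (n t) (hn t htT)]
      exact div_nonneg (mul_nonneg hM.le (sq_nonneg _)) (hn t htT).le
    have hterm : ∑ t ∈ Finset.range T, 1 / (n t * a ^ (2 * (T - t) - 1)) = S n / σ ^ 2 := by
      rw [hS]
      field_simp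
    have hsumD : ∑ t ∈ Finset.range T,
        (1 / (n t * a ^ (2 * (T - t) - 1)) - (2 * (M * nstar t) - M * n t))
        = S n / σ ^ 2 - 2 * (M * C) + M * (∑ t ∈ Finset.range T, n t) := by
      rw [Finset.sum_sub_distrib, Finset.sum_sub_distrib, hterm]
      have e1 : ∑ t ∈ Finset.range T, 2 * (M * nstar t)
          = 2 * M * (∑ t ∈ Finset.range T, nstar t) := by
        rw [Finset.mul_sum]
        exact Finset.sum_congr rfl (fun t _ => by ring)
      have e2 : ∑ t ∈ Finset.range T, M * n t = M * ∑ t ∈ Finset.range T, n t :=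
        (Finset.mul_sum _ _ _).symm
      rw [e1, e2, hsum]
      ring
    have hDge : 0 ≤ ∑ t ∈ Finset.range T,
        (1 / (n t * a ^ (2 * (T - t) - 1)) - (2 * (M * nstar t) - M * n t)) :=
      Finset.sum_nonneg hD0
    have hMC : M * C ≤ S n / σ ^ 2 := by nlinarith [hsumD, hDge]
    constructor
    · rw [hSstar]
      calc σ ^ 2 * (M * C) ≤ σ ^ 2 * (S n / σ ^ 2) := by nlinarith
        _ = S n := by field_simp
    · intro hSeq
      have hSn : S n / σ ^ 2 = M * C := by
        rw [hSeq, hSstar]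
        field_simp
      have hzero : ∑ t ∈ Finset.range T,
          (1 / (n t * a ^ (2 * (T - t) - 1)) - (2 * (M * nstar t) - M * n t)) = 0 := by
        apply le_antisymm _ hDge
        rw [hsumD, hSn]
        nlinarith
      have heach := (Finset.sum_eq_zero_iff_of_nonneg hD0).mp hzero
      intro t ht
      have h1 := heach t (Finset.mem_range.mpr ht)
      rw [hptwise t ht (n t) (hn t ht)] at h1
      have hx := hn t ht
      have h2 : (n t - nstar t) ^ 2 = 0 := by
        by_contra h3
        have h4 : 0 < (n t - nstar t) ^ 2 := lt_of_le_of_ne (sq_nonneg _) (Ne.symm h3)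
        have h5 : 0 < M * (n t - nstar t) ^ 2 / n t := by
          exact div_pos (mul_pos hM h4) hx
        linarith
      have := sq_eq_zero_iff.mp h2
      linarith
  -- positivity of S
  have hSpos : ∀ n : ℕ → ℝ, (∀ t < T, 0 < n t) → 0 < S n := by
    intro n hn
    rw [hS]
    apply mul_pos hσ2
    apply Finset.sum_pos _ (Finset.nonempty_range_iff.mpr (by omega))
    intro t ht
    have h1 := hn t (Finset.mem_range.mp ht)
    have h2 : (0:ℝ) < a ^ (2 * (T - t) - 1) := pow_pos ha0 _
    positivity
  -- norm bound
  set x₀ : ℝ := σ ^ 2 + κ ^ 2 with hx₀def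
  have hx₀ : 0 < x₀ := by positivity
  set m : ℝ := ‖μT‖ ^ 2 with hmdef
  have hmle : m ≤ (d : ℝ) * x₀ := by
    have haTpos : (0:ℝ) < a ^ T := by positivity
    have h1 : ‖μT‖ ≤ Real.sqrt ((d : ℝ) * x₀) := by
      rw [hμT, norm_smul]
      have hn : ‖(a ^ T)⁻¹‖ = (a ^ T)⁻¹ := by
        rw [Real.norm_eq_abs, abs_of_pos (by positivity)]
      rw [hn]
      calc (a ^ T)⁻¹ * ‖θ₀‖ ≤ (a ^ T)⁻¹ * (a ^ T * Real.sqrt ((d:ℝ) * x₀)) := by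
            apply mul_le_mul_of_nonneg_left _ (by positivity)
            exact hθ₀
        _ = Real.sqrt ((d:ℝ) * x₀) := by field_simp
    have h2 : ‖μT‖ ^ 2 ≤ Real.sqrt ((d:ℝ) * x₀) ^ 2 :=
      pow_le_pow_left₀ (norm_nonneg _) h1 2
    rwa [Real.sq_sqrt (by positivity)] at h2
  -- rewrite F via exp
  have hFexp : ∀ n : ℕ → ℝ, 0 < S n →
      F n = Real.exp ((d:ℝ)/2 * Real.log (κ ^ 2)
        + (-((d:ℝ)/2) * Real.log (x₀ + S n) - m/2 * (x₀ + S n)⁻¹)) := by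
    intro n hSn
    have hx : 0 < x₀ + S n := by linarith
    have hx' : 0 < σ ^ 2 + κ ^ 2 + S n := by rw [hx₀def] at hx; linarith
    rw [hF]
    rw [Real.rpow_def_of_pos (div_pos hκ2 hx')]
    rw [show σ ^ 2 + κ ^ 2 + S n = x₀ + S n by rw [hx₀def]]
    rw [Real.log_div hκ2.ne' hx.ne', ← Real.exp_add]
    congr 1
    rw [hmdef]
    field_simp
    ring
  -- strict antitonicity
  have hdpos : (0:ℝ) < (d:ℝ) := by exact_mod_cast Nat.pos_of_ne_zero (by omega)
  have hanti := aux_strictAntiOn ((d:ℝ)) m x₀ hdpos hx₀ hmle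
  have hmem : ∀ n : ℕ → ℝ, 0 < S n → x₀ + S n ∈ Set.Ici x₀ := by
    intro n hSn
    simp only [Set.mem_Ici]; linarith
  have hanti' : ∀ y z : ℝ, y ∈ Set.Ici x₀ → z ∈ Set.Ici x₀ → y < z →
      -((d:ℝ)/2) * Real.log z - m/2 * z⁻¹ < -((d:ℝ)/2) * Real.log y - m/2 * y⁻¹ :=
    fun y z hy hz hyz => hanti hy hz hyz
  -- F comparison
  have hFle : ∀ n : ℕ → ℝ, (∀ t < T, 0 < n t) → (∑ t ∈ Finset.range T, n t) ≤ C →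
      F n ≤ F nstar := by
    intro n hn hnC
    have hS1 := hSpos n hn
    have hS2 := hSpos nstar (fun t _ => hnpos t)
    have hle := (hSsum n hn hnC).1
    rw [hFexp n hS1, hFexp nstar hS2]
    apply Real.exp_le_exp.mpr
    apply (add_le_add_iff_left _).mpr
    rcases eq_or_lt_of_le hle with heq | hlt
    · rw [heq]
    · exact le_of_lt (hanti' _ _ (hmem nstar hS2) (hmem n hS1) (by linarith))
  refine ⟨⟨fun t _ => hnpos t, le_of_eq hsum⟩, hFle, ?_⟩
  intro n hn hnC hFeq t ht
  have hS1 := hSpos n hn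
  have hS2 := hSpos nstar (fun t _ => hnpos t)
  have hle := (hSsum n hn hnC).1
  have hSeq : S n = S nstar := by
    by_contra hne
    have hlt : S nstar < S n := lt_of_le_of_ne hle (Ne.symm hne)
    have hstrict := hanti' _ _ (hmem nstar hS2) (hmem n hS1) (by linarith)
    rw [hFexp n hS1, hFexp nstar hS2] at hFeq
    have hinj := Real.exp_injective hFeq
    linarith
  exact (hSsum n hn hnC).2 hSeq t ht
end
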